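/- arXiv:2105.12222 — 9 statements merged into one kernel-verified Lean document; each statement's English description precedes it below -/
import Mathlib

section
/- Let A : X → Y be a continuous linear operator with closed range between real Hilbert spaces, let b ∈ Y, let b̄ be the orthogonal projection of b onto the range of A, and let C = A⁻¹{b̄}. Then for every x ∈ X, the projection of x onto C equals x − A†(Ax − b), where A† is the Moore-Penrose inverse of A. -/
open scoped RealInnerProductSpace

/-!
The Penrose conditions make `A B` the orthogonal projection onto `ran A` and `B A` the
orthogonal projection onto `(ker A)ᗮ`. Hence `b̄ = A B b`, the point `x - B (A x - b)` is mapped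
to `b̄`, and for `z ∈ C` the displacement `x - (x - B (A x - b))` equals `B A (x - z)`, whose norm
is at most `‖x - z‖` because `B A` is an orthogonal projection.
-/

section InnerProduct

variable {E : Type*} [NormedAddCommGroup E] [InnerProductSpace ℝ E]

theorem norm_le_norm_of_inner_sub_eq_zero {u w : E} (h : ⟪u, w - u⟫ = 0) : ‖u‖ ≤ ‖w‖ := by
  have hpyth : ‖w‖ * ‖w‖ = ‖u‖ * ‖u‖ + ‖w - u‖ * ‖w - u‖ := by
    simpa using norm_add_sq_eq_norm_sq_add_norm_sq_real h
  nlinarith [norm_nonneg u, norm_nonneg w]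

theorem eq_of_norm_sub_le_of_inner_sub_eq_zero {b p q : E} (horth : ⟪b - p, p - q⟫ = 0)
    (hmin : ‖b - q‖ ≤ ‖b - p‖) : q = p := by
  have hpyth : ‖b - q‖ * ‖b - q‖ = ‖b - p‖ * ‖b - p‖ + ‖p - q‖ * ‖p - q‖ := by
    simpa using norm_add_sq_eq_norm_sq_add_norm_sq_real horth
  have hpq : ‖p - q‖ = 0 := by nlinarith [norm_nonneg (b - q), norm_nonneg (p - q)]
  exact (sub_eq_zero.mp (norm_eq_zero.mp hpq)).symm

end InnerProduct

section PenroseConditions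

variable {X Y : Type*}
  [NormedAddCommGroup X] [InnerProductSpace ℝ X] [NormedAddCommGroup Y] [InnerProductSpace ℝ Y]
  {A : X →L[ℝ] Y} {B : Y →L[ℝ] X}

theorem inner_sub_apply_apply_apply_eq_zero (pen1 : ∀ x, A (B (A x)) = A x)
    (pen3 : ∀ y z, ⟪A (B y), z⟫ = ⟪y, A (B z)⟫) (b : Y) (u : X) :
    ⟪b - A (B b), A u⟫ = 0 := by
  rw [inner_sub_left, pen3, pen1, sub_self]

theorem eq_apply_apply_of_isNearest (pen1 : ∀ x, A (B (A x)) = A x)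
    (pen3 : ∀ y z, ⟪A (B y), z⟫ = ⟪y, A (B z)⟫) {b bbar : Y}
    (hbbar : bbar ∈ Set.range A ∧ ∀ y ∈ Set.range A, ‖b - bbar‖ ≤ ‖b - y‖) :
    bbar = A (B b) := by
  obtain ⟨⟨w, rfl⟩, hmin⟩ := hbbar
  refine eq_of_norm_sub_le_of_inner_sub_eq_zero ?_ (hmin _ ⟨B b, rfl⟩)
  rw [← map_sub]
  exact inner_sub_apply_apply_apply_eq_zero pen1 pen3 b _

theorem norm_apply_apply_le (pen1 : ∀ x, A (B (A x)) = A x)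
    (pen4 : ∀ x z, ⟪B (A x), z⟫ = ⟪x, B (A z)⟫) (w : X) : ‖B (A w)‖ ≤ ‖w‖ := by
  refine norm_le_norm_of_inner_sub_eq_zero ?_
  rw [pen4, map_sub, pen1, sub_self, map_zero, inner_zero_right]

end PenroseConditions

theorem stmt_0_general {X Y : Type*}
    [NormedAddCommGroup X] [InnerProductSpace ℝ X]
    [NormedAddCommGroup Y] [InnerProductSpace ℝ Y]
    (A : X →L[ℝ] Y)
    (b bbar : Y)
    (hbbar : bbar ∈ Set.range A ∧ ∀ y ∈ Set.range A, ‖b - bbar‖ ≤ ‖b - y‖)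
    (B : Y →L[ℝ] X)
    (pen1 : ∀ x : X, A (B (A x)) = A x)
    (pen2 : ∀ y : Y, B (A (B y)) = B y)
    (pen3 : ∀ y z : Y, ⟪A (B y), z⟫ = ⟪y, A (B z)⟫)
    (pen4 : ∀ x z : X, ⟪B (A x), z⟫ = ⟪x, B (A z)⟫)
    (x : X) :
    x - B (A x - b) ∈ A ⁻¹' {bbar} ∧
      ∀ z ∈ A ⁻¹' {bbar}, ‖x - (x - B (A x - b))‖ ≤ ‖x - z‖ := by
  have hbbar_eq : bbar = A (B b) := eq_apply_apply_of_isNearest pen1 pen3 hbbar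
  refine ⟨?_, fun z hz => ?_⟩
  · change A (x - B (A x - b)) = bbar
    rw [map_sub, map_sub, map_sub, pen1, hbbar_eq, sub_sub_cancel]
  · have hAz : A z = A (B b) := hbbar_eq ▸ hz
    have hdisp : x - (x - B (A x - b)) = B (A (x - z)) := by
      rw [sub_sub_cancel, map_sub, map_sub, map_sub, hAz, pen2]
    rw [hdisp]
    exact norm_apply_apply_le pen1 pen4 (x - z)

/-- If `A : X → Y` is a continuous linear operator with closed range between real
Hilbert spaces, `b ∈ Y`, `bbar` is the orthogonal projection of `b` onto the range of `A`
(characterized as the nearest point of `ran A` to `b`), `B` is the Moore-Penrose inverse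
of `A` (characterized by the four Penrose conditions), and `C = A⁻¹{bbar}`, then for every
`x`, the projection of `x` onto `C` is `x - B (A x - b)`, i.e. this point lies in `C` and
is the nearest point of `C` to `x`. -/
theorem stmt_0 {X Y : Type*}
    [NormedAddCommGroup X] [InnerProductSpace ℝ X] [CompleteSpace X]
    [NormedAddCommGroup Y] [InnerProductSpace ℝ Y] [CompleteSpace Y]
    (A : X →L[ℝ] Y) (hclosed : IsClosed (Set.range A))
    (b bbar : Y)
    (hbbar : bbar ∈ Set.range A ∧ ∀ y ∈ Set.range A, ‖b - bbar‖ ≤ ‖b - y‖)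
    (B : Y →L[ℝ] X)
    (pen1 : ∀ x : X, A (B (A x)) = A x)
    (pen2 : ∀ y : Y, B (A (B y)) = B y)
    (pen3 : ∀ y z : Y, ⟪A (B y), z⟫ = ⟪y, A (B z)⟫)
    (pen4 : ∀ x z : X, ⟪B (A x), z⟫ = ⟪x, B (A z)⟫)
    (x : X) :
    x - B (A x - b) ∈ A ⁻¹' {bbar} ∧
      ∀ z ∈ A ⁻¹' {bbar}, ‖x - (x - B (A x - b))‖ ≤ ‖x - z‖ :=
  stmt_0_general A b bbar hbbar B pen1 pen2 pen3 pen4 x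
end

section
/- Let e ∈ ℝⁿ and f ∈ ℝᵐ be nonzero vectors. Then the range of the linear map 𝒜 : ℝ^{m×n} → ℝᵐ × ℝⁿ, T ↦ (Te, Tᵀf), equals the orthogonal complement of the span of (f, −e), i.e., ran 𝒜 = {(y,x) ∈ ℝᵐ × ℝⁿ : ⟨f,y⟩ = ⟨e,x⟩}. -/
open Matrix

/-!
The inclusion `⊆` is `⟨f, T e⟩ = fᵀ T e = ⟨e, Tᵀ f⟩`. For `⊇`, choose `a` and `b` with `⟨a, e⟩ = 1`
and `⟨b, f⟩ = 1`, and correct the rank-one matrix `y aᵀ`, which already satisfies `T e = y`, by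
`b zᵀ` with `z ⊥ e`; this leaves `T e` unchanged, and `z := x - ⟨e, x⟩ a` makes
`Tᵀ f = ⟨f, y⟩ a + z = x` exactly when `⟨f, y⟩ = ⟨e, x⟩`.
-/

section

variable {K ι m n : Type*}

theorem dotProduct_mulVec_eq_dotProduct_transpose_mulVec [Fintype m] [Fintype n] [CommSemiring K]
    (T : Matrix m n K) (e : n → K) (f : m → K) : f ⬝ᵥ T *ᵥ e = e ⬝ᵥ Tᵀ *ᵥ f := by
  rw [dotProduct_mulVec, mulVec_transpose, dotProduct_comm]

theorem exists_dotProduct_eq_one [Fintype ι] [Field K] {e : ι → K} (he : e ≠ 0) :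
    ∃ a : ι → K, a ⬝ᵥ e = 1 := by
  classical
  obtain ⟨i, hi⟩ := Function.ne_iff.mp he
  exact ⟨Pi.single i (e i)⁻¹, by rw [single_dotProduct, inv_mul_cancel₀ hi]⟩

theorem exists_mulVec_eq_and_transpose_mulVec_eq [Fintype m] [Fintype n] [CommRing K]
    {e a : n → K} {f b : m → K} (ha : a ⬝ᵥ e = 1) (hb : b ⬝ᵥ f = 1) {y : m → K} {x : n → K}
    (h : f ⬝ᵥ y = e ⬝ᵥ x) : ∃ T : Matrix m n K, T *ᵥ e = y ∧ Tᵀ *ᵥ f = x := by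
  set z := x - (e ⬝ᵥ x) • a
  have hz : z ⬝ᵥ e = 0 := by
    rw [sub_dotProduct, smul_dotProduct, ha, smul_eq_mul, mul_one, dotProduct_comm, sub_self]
  refine ⟨vecMulVec y a + vecMulVec b z, ?_, ?_⟩
  · simp [add_mulVec, vecMulVec_mulVec, ha, hz]
  · simp [transpose_add, add_mulVec, vecMulVec_mulVec, hb, dotProduct_comm y f, h, z]

theorem range_mulVec_prod_transpose_mulVec [Fintype m] [Fintype n] [Field K] {e : n → K}
    {f : m → K} (he : e ≠ 0) (hf : f ≠ 0) :
    Set.range (fun T : Matrix m n K => (T *ᵥ e, Tᵀ *ᵥ f)) = {p | f ⬝ᵥ p.1 = e ⬝ᵥ p.2} := by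
  ext ⟨y, x⟩
  constructor
  · rintro ⟨T, ⟨⟩⟩
    exact dotProduct_mulVec_eq_dotProduct_transpose_mulVec T e f
  · intro h
    obtain ⟨a, ha⟩ := exists_dotProduct_eq_one he
    obtain ⟨b, hb⟩ := exists_dotProduct_eq_one hf
    obtain ⟨T, hTe, hTf⟩ := exists_mulVec_eq_and_transpose_mulVec_eq ha hb h
    exact ⟨T, Prod.ext hTe hTf⟩

end

/-- For nonzero `e ∈ ℝⁿ`, `f ∈ ℝᵐ`, the range of `𝒜 : T ↦ (T e, Tᵀ f)` equals
`{(y,x) : ⟨f,y⟩ = ⟨e,x⟩}`, the orthogonal complement of the span of `(f, -e)`. -/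
theorem stmt_2 {m n : ℕ} (e : Fin n → ℝ) (f : Fin m → ℝ) (he : e ≠ 0) (hf : f ≠ 0) :
    Set.range (fun T : Matrix (Fin m) (Fin n) ℝ => (T.mulVec e, T.transpose.mulVec f))
      = {p : (Fin m → ℝ) × (Fin n → ℝ) | f ⬝ᵥ p.1 = e ⬝ᵥ p.2} :=
  range_mulVec_prod_transpose_mulVec he hf
end

section
/- Let e ∈ ℝⁿ and f ∈ ℝᵐ be nonzero. Define 𝒜(T) = (Te, Tᵀf) and, for (y,x) ∈ ℝᵐ × ℝⁿ, define B(y,x) = (1/‖e‖²)(y eᵀ − (⟨f,y⟩/(‖e‖²+‖f‖²)) f eᵀ) + (1/‖f‖²)(f xᵀ − (⟨e,x⟩/(‖e‖²+‖f‖²)) f eᵀ). Then B is the Moore-Penrose inverse of 𝒜, i.e., B satisfies the four Penrose conditions: 𝒜B𝒜 = 𝒜, B𝒜B = B, 𝒜B is self-adjoint, and B𝒜 is self-adjoint. -/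
/-!
The range of `𝒜 : T ↦ (T e, Tᵀ f)` lies in the hyperplane orthogonal to `ν = (f, -e)`, since
`⟨f, T e⟩ = ⟨e, Tᵀ f⟩`. A direct computation shows that `𝒜 B` is the orthogonal projection
`p ↦ p - (⟨ν, p⟩ / ‖ν‖²) ν` and that `B ν = 0`; this gives `𝒜 B 𝒜 = 𝒜`, `B 𝒜 B = B` and the
self-adjointness of `𝒜 B`. For `B 𝒜`, write `B = 𝒜* G` with `𝒜* (u, w) = u eᵀ + f wᵀ`; then
`⟨B 𝒜 S, T⟩ = ⟨G 𝒜 S, 𝒜 T⟩`, and `G` is symmetric on the range of `𝒜`.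
-/

open Matrix

namespace Matrix

variable {𝕜 m n : Type*} [Field 𝕜] [Fintype m] [Fintype n]

def marginalMap (e : n → 𝕜) (f : m → 𝕜) (T : Matrix m n 𝕜) : (m → 𝕜) × (n → 𝕜) :=
  (T *ᵥ e, Tᵀ *ᵥ f)

def marginalAdjoint (e : n → 𝕜) (f : m → 𝕜) (q : (m → 𝕜) × (n → 𝕜)) : Matrix m n 𝕜 :=
  vecMulVec q.1 e + vecMulVec f q.2

def marginalPinv (e : n → 𝕜) (f : m → 𝕜) (p : (m → 𝕜) × (n → 𝕜)) : Matrix m n 𝕜 :=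
  (e ⬝ᵥ e)⁻¹ • (vecMulVec p.1 e - ((f ⬝ᵥ p.1) / (e ⬝ᵥ e + f ⬝ᵥ f)) • vecMulVec f e)
    + (f ⬝ᵥ f)⁻¹ • (vecMulVec f p.2 - ((e ⬝ᵥ p.2) / (e ⬝ᵥ e + f ⬝ᵥ f)) • vecMulVec f e)

variable (e : n → 𝕜) (f : m → 𝕜)

lemma sum_sum_marginalAdjoint_mul (q : (m → 𝕜) × (n → 𝕜)) (T : Matrix m n 𝕜) :
    ∑ i, ∑ j, marginalAdjoint e f q i j * T i j
      = q.1 ⬝ᵥ (marginalMap e f T).1 + q.2 ⬝ᵥ (marginalMap e f T).2 := by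
  simp only [marginalAdjoint, marginalMap, add_apply, vecMulVec_apply, add_mul,
    Finset.sum_add_distrib, dotProduct, mulVec, transpose_apply, Finset.mul_sum]
  rw [Finset.sum_comm (f := fun j i => q.2 j * (T i j * f i))]
  congr 1 <;> exact Finset.sum_congr rfl fun i _ => Finset.sum_congr rfl fun j _ => by ring

lemma marginalPinv_eq_marginalAdjoint (p : (m → 𝕜) × (n → 𝕜)) :
    marginalPinv e f p = marginalAdjoint e f
      ((e ⬝ᵥ e)⁻¹ • p.1 - (((e ⬝ᵥ e)⁻¹ * (f ⬝ᵥ p.1) + (f ⬝ᵥ f)⁻¹ * (e ⬝ᵥ p.2))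
          / (e ⬝ᵥ e + f ⬝ᵥ f)) • f,
        (f ⬝ᵥ f)⁻¹ • p.2) := by
  ext i j
  simp only [marginalPinv, marginalAdjoint, add_apply, sub_apply, smul_apply, vecMulVec_apply,
    Pi.sub_apply, Pi.smul_apply, smul_eq_mul]
  ring

lemma marginalMap_marginalPinv (he : e ⬝ᵥ e ≠ 0) (hf : f ⬝ᵥ f ≠ 0) (hs : e ⬝ᵥ e + f ⬝ᵥ f ≠ 0)
    (p : (m → 𝕜) × (n → 𝕜)) :
    marginalMap e f (marginalPinv e f p)
      = p - ((f ⬝ᵥ p.1 - e ⬝ᵥ p.2) / (e ⬝ᵥ e + f ⬝ᵥ f)) • (f, -e) := by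
  ext i
  · simp only [marginalMap, marginalPinv, add_mulVec, sub_mulVec, smul_mulVec, vecMulVec_mulVec]
    simp only [dotProduct_comm e, op_smul_eq_smul, Pi.add_apply, Pi.smul_apply, Pi.sub_apply,
      smul_eq_mul, Prod.smul_mk, smul_neg, Prod.fst_sub]
    field_simp
    ring
  · simp only [marginalMap, marginalPinv, transpose_add, transpose_sub, transpose_smul,
      transpose_vecMulVec, add_mulVec, sub_mulVec, smul_mulVec, vecMulVec_mulVec]
    simp only [op_smul_eq_smul, dotProduct_comm f, Pi.add_apply, Pi.smul_apply, Pi.sub_apply,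
      smul_eq_mul, Prod.smul_mk, smul_neg, Prod.snd_sub, Pi.neg_apply, sub_neg_eq_add]
    field_simp
    ring

lemma marginalPinv_add_smul (he : e ⬝ᵥ e ≠ 0) (hf : f ⬝ᵥ f ≠ 0) (hs : e ⬝ᵥ e + f ⬝ᵥ f ≠ 0)
    (p : (m → 𝕜) × (n → 𝕜)) (c : 𝕜) :
    marginalPinv e f (p + c • (f, -e)) = marginalPinv e f p := by
  ext i j
  simp only [marginalPinv, Prod.smul_mk, smul_neg, Prod.fst_add, dotProduct_add, dotProduct_smul,
    smul_eq_mul, Prod.snd_add, dotProduct_neg, add_apply, smul_apply, sub_apply, vecMulVec_apply,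
    Pi.add_apply, Pi.smul_apply, Pi.neg_apply]
  field_simp
  ring

lemma marginalMap_marginalPinv_marginalMap (he : e ⬝ᵥ e ≠ 0) (hf : f ⬝ᵥ f ≠ 0)
    (hs : e ⬝ᵥ e + f ⬝ᵥ f ≠ 0) (T : Matrix m n 𝕜) :
    marginalMap e f (marginalPinv e f (marginalMap e f T)) = marginalMap e f T := by
  rw [marginalMap_marginalPinv e f he hf hs]
  simp [marginalMap, dotProduct_transpose_mulVec]

lemma marginalPinv_marginalMap_marginalPinv (he : e ⬝ᵥ e ≠ 0) (hf : f ⬝ᵥ f ≠ 0)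
    (hs : e ⬝ᵥ e + f ⬝ᵥ f ≠ 0) (p : (m → 𝕜) × (n → 𝕜)) :
    marginalPinv e f (marginalMap e f (marginalPinv e f p)) = marginalPinv e f p := by
  rw [marginalMap_marginalPinv e f he hf hs, sub_eq_add_neg, ← neg_smul,
    marginalPinv_add_smul e f he hf hs]

lemma marginalMap_marginalPinv_dotProduct_comm (he : e ⬝ᵥ e ≠ 0) (hf : f ⬝ᵥ f ≠ 0)
    (hs : e ⬝ᵥ e + f ⬝ᵥ f ≠ 0) (p q : (m → 𝕜) × (n → 𝕜)) :
    (marginalMap e f (marginalPinv e f p)).1 ⬝ᵥ q.1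
        + (marginalMap e f (marginalPinv e f p)).2 ⬝ᵥ q.2
      = p.1 ⬝ᵥ (marginalMap e f (marginalPinv e f q)).1
        + p.2 ⬝ᵥ (marginalMap e f (marginalPinv e f q)).2 := by
  simp only [marginalMap_marginalPinv e f he hf hs, Prod.fst_sub, Prod.snd_sub, Prod.smul_mk,
    sub_dotProduct, dotProduct_sub, smul_dotProduct, dotProduct_smul, neg_dotProduct,
    dotProduct_neg, smul_eq_mul]
  rw [dotProduct_comm p.1 f, dotProduct_comm p.2 e]
  ring

lemma sum_sum_marginalPinv_marginalMap_mul_comm (S T : Matrix m n 𝕜) :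
    ∑ i, ∑ j, marginalPinv e f (marginalMap e f S) i j * T i j
      = ∑ i, ∑ j, S i j * marginalPinv e f (marginalMap e f T) i j := by
  simp only [mul_comm (S _ _), marginalPinv_eq_marginalAdjoint, sum_sum_marginalAdjoint_mul]
  simp only [marginalMap, sub_dotProduct, smul_dotProduct, smul_eq_mul,
    dotProduct_transpose_mulVec _ e f]
  rw [dotProduct_comm (S *ᵥ e), dotProduct_comm (Sᵀ *ᵥ f)]
  ring

end Matrix

/-- For nonzero `e ∈ ℝⁿ`, `f ∈ ℝᵐ`, the map
`B(y,x) = (1/‖e‖²)(y eᵀ − (⟨f,y⟩/(‖e‖²+‖f‖²)) f eᵀ) + (1/‖f‖²)(f xᵀ − (⟨e,x⟩/(‖e‖²+‖f‖²)) f eᵀ)`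
satisfies the four Penrose conditions for `𝒜 : T ↦ (T e, Tᵀ f)`, hence is the
Moore-Penrose inverse of `𝒜`. Self-adjointness is with respect to the product inner
product on `ℝᵐ × ℝⁿ` and the Frobenius inner product on `ℝ^{m×n}`. -/
theorem stmt_5 {m n : ℕ} (e : Fin n → ℝ) (f : Fin m → ℝ) (he : e ≠ 0) (hf : f ≠ 0)
    (A : Matrix (Fin m) (Fin n) ℝ → (Fin m → ℝ) × (Fin n → ℝ))
    (hA : ∀ T, A T = (T.mulVec e, T.transpose.mulVec f))
    (B : (Fin m → ℝ) × (Fin n → ℝ) → Matrix (Fin m) (Fin n) ℝ)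
    (hB : ∀ y x, B (y, x) =
      (e ⬝ᵥ e)⁻¹ • (vecMulVec y e - ((f ⬝ᵥ y) / (e ⬝ᵥ e + f ⬝ᵥ f)) • vecMulVec f e)
      + (f ⬝ᵥ f)⁻¹ • (vecMulVec f x - ((e ⬝ᵥ x) / (e ⬝ᵥ e + f ⬝ᵥ f)) • vecMulVec f e)) :
    (∀ T, A (B (A T)) = A T) ∧
    (∀ p, B (A (B p)) = B p) ∧
    (∀ p q : (Fin m → ℝ) × (Fin n → ℝ),
      (A (B p)).1 ⬝ᵥ q.1 + (A (B p)).2 ⬝ᵥ q.2 = p.1 ⬝ᵥ (A (B q)).1 + p.2 ⬝ᵥ (A (B q)).2) ∧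
    (∀ S T : Matrix (Fin m) (Fin n) ℝ,
      ∑ i, ∑ j, (B (A S)) i j * T i j = ∑ i, ∑ j, S i j * (B (A T)) i j) := by
  obtain rfl : A = marginalMap e f := funext hA
  obtain rfl : B = marginalPinv e f := funext fun p => hB p.1 p.2
  have hee : 0 < e ⬝ᵥ e := by simpa using dotProduct_star_self_pos_iff.mpr he
  have hff : 0 < f ⬝ᵥ f := by simpa using dotProduct_star_self_pos_iff.mpr hf
  have hs : e ⬝ᵥ e + f ⬝ᵥ f ≠ 0 := (add_pos hee hff).ne'
  exact ⟨marginalMap_marginalPinv_marginalMap e f hee.ne' hff.ne' hs,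
    marginalPinv_marginalMap_marginalPinv e f hee.ne' hff.ne' hs,
    marginalMap_marginalPinv_dotProduct_comm e f hee.ne' hff.ne' hs,
    sum_sum_marginalPinv_marginalMap_mul_comm e f⟩
end

section
/- Let e ∈ ℝⁿ and f ∈ ℝᵐ be nonzero and let 𝒜(T) = (Te, Tᵀf). Then for every T ∈ ℝ^{m×n}, the orthogonal projection of T onto the range of 𝒜* (equivalently, onto (ker 𝒜)ᗮ) with respect to the Frobenius inner product is P(T) = (1/‖e‖²) (Te) eᵀ + (1/‖f‖²) f (fᵀT) − (⟨f, Te⟩/(‖e‖²‖f‖²)) f eᵀ. -/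
/-!
`P T` is written as `y eᵀ + f xᵀ` with `x = Tᵀf / ‖f‖²` and
`y = Te / ‖e‖² - (⟨f, Te⟩ / (‖e‖²‖f‖²)) f`, so it lies in `ran 𝒜*`. The residual `R = T - P T`
satisfies `R e = 0` and `Rᵀ f = 0`, and the Frobenius pairing of `R` with `y eᵀ + f xᵀ` is
`⟨y, R e⟩ + ⟨x, Rᵀ f⟩`, so `R ⊥ ran 𝒜*`. Pythagoras then makes `P T` the nearest point of
`ran 𝒜*` to `T`.
-/

namespace Matrix

variable {K : Type*} {m n : Type*} [Fintype m] [Fintype n]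

section Field

variable [Field K]

/-- The projection onto the range of `(y, x) ↦ y eᵀ + f xᵀ`. -/
noncomputable def adjointRangeProj (e : n → K) (f : m → K) (T : Matrix m n K) : Matrix m n K :=
  (e ⬝ᵥ e)⁻¹ • vecMulVec (T *ᵥ e) e + (f ⬝ᵥ f)⁻¹ • vecMulVec f (Tᵀ *ᵥ f)
    - ((f ⬝ᵥ T *ᵥ e) / ((e ⬝ᵥ e) * (f ⬝ᵥ f))) • vecMulVec f e

theorem adjointRangeProj_eq_vecMulVec_add (e : n → K) (f : m → K) (T : Matrix m n K) :
    adjointRangeProj e f T =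
      vecMulVec ((e ⬝ᵥ e)⁻¹ • (T *ᵥ e) - ((f ⬝ᵥ T *ᵥ e) / ((e ⬝ᵥ e) * (f ⬝ᵥ f))) • f) e
        + vecMulVec f ((f ⬝ᵥ f)⁻¹ • (Tᵀ *ᵥ f)) := by
  rw [adjointRangeProj, sub_vecMulVec, smul_vecMulVec, smul_vecMulVec, vecMulVec_smul]
  abel

theorem vecMulVec_mulVec_eq_smul {l : Type*} (u : l → K) (v w : n → K) :
    vecMulVec u v *ᵥ w = (v ⬝ᵥ w) • u := by
  rw [vecMulVec_mulVec, op_smul_eq_smul]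

theorem adjointRangeProj_mulVec (e : n → K) (f : m → K) (he : e ⬝ᵥ e ≠ 0)
    (T : Matrix m n K) : adjointRangeProj e f T *ᵥ e = T *ᵥ e := by
  ext i
  simp only [adjointRangeProj, sub_mulVec, add_mulVec, smul_mulVec, vecMulVec_mulVec_eq_smul,
    dotProduct_comm (Tᵀ *ᵥ f), dotProduct_transpose_mulVec,
    Pi.sub_apply, Pi.add_apply, Pi.smul_apply, smul_eq_mul]
  field_simp
  ring

theorem transpose_adjointRangeProj (e : n → K) (f : m → K) (T : Matrix m n K) :
    (adjointRangeProj e f T)ᵀ = adjointRangeProj f e Tᵀ := by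
  rw [adjointRangeProj, adjointRangeProj, transpose_transpose, dotProduct_transpose_mulVec,
    mul_comm (e ⬝ᵥ e)]
  simp only [transpose_sub, transpose_add, transpose_smul, transpose_vecMulVec]
  abel

theorem transpose_adjointRangeProj_mulVec (e : n → K) (f : m → K) (hf : f ⬝ᵥ f ≠ 0)
    (T : Matrix m n K) : (adjointRangeProj e f T)ᵀ *ᵥ f = Tᵀ *ᵥ f := by
  rw [transpose_adjointRangeProj, adjointRangeProj_mulVec f e hf]

end Field

theorem sum_sum_mul_vecMulVec [CommSemiring K] (R : Matrix m n K) (y : m → K) (e : n → K) :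
    ∑ i, ∑ j, R i j * vecMulVec y e i j = y ⬝ᵥ R *ᵥ e := by
  simp only [vecMulVec_apply, dotProduct, mulVec, Finset.mul_sum]
  exact Finset.sum_congr rfl fun i _ => Finset.sum_congr rfl fun j _ => by ring

theorem sum_sum_mul_vecMulVec_add [CommSemiring K] (R : Matrix m n K) (y f : m → K)
    (e x : n → K) :
    ∑ i, ∑ j, R i j * (vecMulVec y e + vecMulVec f x) i j = y ⬝ᵥ R *ᵥ e + x ⬝ᵥ Rᵀ *ᵥ f := by
  have hcomm : ∑ i, ∑ j, R i j * vecMulVec f x i j = ∑ j, ∑ i, Rᵀ j i * vecMulVec x f j i := by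
    rw [Finset.sum_comm]
    simp only [transpose_apply, vecMulVec_apply, mul_comm (f _)]
  simp only [add_apply, mul_add, Finset.sum_add_distrib]
  rw [sum_sum_mul_vecMulVec, hcomm, sum_sum_mul_vecMulVec]

theorem sum_sum_sq_le_sum_sum_sq_add (R D : Matrix m n ℝ)
    (h : ∑ i, ∑ j, R i j * D i j = 0) :
    ∑ i, ∑ j, R i j ^ 2 ≤ ∑ i, ∑ j, (R + D) i j ^ 2 := by
  have hexpand : ∑ i, ∑ j, (R + D) i j ^ 2
      = ∑ i, ∑ j, R i j ^ 2 + 2 * ∑ i, ∑ j, R i j * D i j + ∑ i, ∑ j, D i j ^ 2 := by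
    simp only [add_apply, add_sq, Finset.sum_add_distrib, Finset.mul_sum, mul_assoc]
  have hD : 0 ≤ ∑ i, ∑ j, D i j ^ 2 := by positivity
  rw [hexpand, h]
  linarith

theorem sum_sum_sq_sub_adjointRangeProj_le (e : n → ℝ) (f : m → ℝ) (he : e ≠ 0) (hf : f ≠ 0)
    (T : Matrix m n ℝ) (y : m → ℝ) (x : n → ℝ) :
    ∑ i, ∑ j, (T - adjointRangeProj e f T) i j ^ 2
      ≤ ∑ i, ∑ j, (T - (vecMulVec y e + vecMulVec f x)) i j ^ 2 := by
  set P := adjointRangeProj e f T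
  obtain ⟨y₀, x₀, hP⟩ : ∃ y₀ x₀, P = vecMulVec y₀ e + vecMulVec f x₀ :=
    ⟨_, _, adjointRangeProj_eq_vecMulVec_add e f T⟩
  have hRe : (T - P) *ᵥ e = 0 := by
    rw [sub_mulVec, adjointRangeProj_mulVec e f (mt dotProduct_self_eq_zero.mp he), sub_self]
  have hRf : (T - P)ᵀ *ᵥ f = 0 := by
    rw [transpose_sub, sub_mulVec,
      transpose_adjointRangeProj_mulVec e f (mt dotProduct_self_eq_zero.mp hf), sub_self]
  have hdiff :
      P - (vecMulVec y e + vecMulVec f x) = vecMulVec (y₀ - y) e + vecMulVec f (x₀ - x) := by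
    rw [hP, sub_vecMulVec, vecMulVec_sub]
    abel
  have horth : ∑ i, ∑ j, (T - P) i j * (P - (vecMulVec y e + vecMulVec f x)) i j = 0 := by
    rw [hdiff, sum_sum_mul_vecMulVec_add, hRe, hRf, dotProduct_zero, dotProduct_zero, add_zero]
  simpa using sum_sum_sq_le_sum_sum_sq_add _ _ horth

end Matrix

open Matrix

/-- For nonzero `e ∈ ℝⁿ`, `f ∈ ℝᵐ`, the orthogonal projection (Frobenius inner product) of
`T ∈ ℝ^{m×n}` onto the range of `𝒜* : (y,x) ↦ y eᵀ + f xᵀ` is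
`P T = (1/‖e‖²)(Te)eᵀ + (1/‖f‖²) f (fᵀT) − (⟨f,Te⟩/(‖e‖²‖f‖²)) f eᵀ`:
`P T` lies in `ran 𝒜*` and is the nearest point of `ran 𝒜*` to `T` in Frobenius norm. -/
theorem stmt_8 {m n : ℕ} (e : Fin n → ℝ) (f : Fin m → ℝ) (he : e ≠ 0) (hf : f ≠ 0)
    (T : Matrix (Fin m) (Fin n) ℝ) :
    ((e ⬝ᵥ e)⁻¹ • vecMulVec (T.mulVec e) e + (f ⬝ᵥ f)⁻¹ • vecMulVec f (T.transpose.mulVec f)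
        - ((f ⬝ᵥ T.mulVec e) / ((e ⬝ᵥ e) * (f ⬝ᵥ f))) • vecMulVec f e) ∈
      Set.range (fun p : (Fin m → ℝ) × (Fin n → ℝ) => vecMulVec p.1 e + vecMulVec f p.2) ∧
    ∀ S ∈ Set.range (fun p : (Fin m → ℝ) × (Fin n → ℝ) => vecMulVec p.1 e + vecMulVec f p.2),
      (∑ i, ∑ j, (T - ((e ⬝ᵥ e)⁻¹ • vecMulVec (T.mulVec e) e
          + (f ⬝ᵥ f)⁻¹ • vecMulVec f (T.transpose.mulVec f)
          - ((f ⬝ᵥ T.mulVec e) / ((e ⬝ᵥ e) * (f ⬝ᵥ f))) • vecMulVec f e)) i j ^ 2)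
        ≤ ∑ i, ∑ j, (T - S) i j ^ 2 := by
  refine ⟨⟨(_, _), (adjointRangeProj_eq_vecMulVec_add e f T).symm⟩, ?_⟩
  rintro _ ⟨⟨y, x⟩, rfl⟩
  exact sum_sum_sq_sub_adjointRangeProj_le e f he hf T y x
end

section
/- Let e ∈ ℝⁿ and f ∈ ℝᵐ be nonzero, let s ∈ ℝᵐ, r ∈ ℝⁿ with the consistency condition ⟨f,s⟩ = ⟨e,r⟩, and let C = {T ∈ ℝ^{m×n} : Te = s and Tᵀf = r}. Then C is nonempty, and for every T ∈ ℝ^{m×n}, the Frobenius-norm projection of T onto C is P_C(T) = T − (1/‖e‖²)((Te−s)eᵀ − (⟨f, Te−s⟩/(‖e‖²+‖f‖²)) f eᵀ) − (1/‖f‖²)(f(Tᵀf−r)ᵀ − (⟨e, Tᵀf−r⟩/(‖e‖²+‖f‖²)) f eᵀ). -/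
/-!
The constraint set `C` is an affine subspace whose direction space consists of the matrices
`D` with `D e = 0` and `Dᵀ f = 0`. Every rank-one matrix `u eᵀ` or `f vᵀ` is Frobenius-orthogonal
to such a `D`, since `⟨u eᵀ, D⟩ = uᵀ D e` and `⟨f vᵀ, D⟩ = vᵀ Dᵀ f`. The candidate `P` lies in `C`
(a direct computation, using `⟨f, s⟩ = ⟨e, r⟩`), and `T - P` has the form `u eᵀ + f vᵀ`; so for
every `S ∈ C` Pythagoras gives `‖T - S‖² = ‖T - P‖² + ‖P - S‖² ≥ ‖T - P‖²`.
-/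

open Matrix

theorem Matrix.dotProduct_self_pos {n R : Type*} [Fintype n] [Ring R] [LinearOrder R]
    [IsStrictOrderedRing R] {v : n → R} (hv : v ≠ 0) : 0 < v ⬝ᵥ v :=
  (Finset.sum_nonneg fun i _ => mul_self_nonneg (v i)).lt_of_ne'
    (dotProduct_self_eq_zero.not.mpr hv)

section Frobenius

variable {m n R : Type*} [Fintype m] [Fintype n]

theorem sum_sum_vecMulVec_mul [CommSemiring R] (u : m → R) (v : n → R) (D : Matrix m n R) :
    ∑ i, ∑ j, vecMulVec u v i j * D i j = u ⬝ᵥ D *ᵥ v := by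
  simp only [vecMulVec_apply, dotProduct, mulVec, Finset.mul_sum]
  exact Finset.sum_congr rfl fun i _ => Finset.sum_congr rfl fun j _ => by ring

theorem sum_sum_vecMulVec_add_vecMulVec_mul_eq_zero [CommSemiring R] {e : n → R} {f : m → R}
    {D : Matrix m n R} (hDe : D *ᵥ e = 0) (hDf : Dᵀ *ᵥ f = 0) (u : m → R) (v : n → R) :
    ∑ i, ∑ j, (vecMulVec u e + vecMulVec f v) i j * D i j = 0 := by
  simp only [Matrix.add_apply, add_mul, Finset.sum_add_distrib, sum_sum_vecMulVec_mul,
    ← dotProduct_transpose_mulVec D v f, hDe, hDf, dotProduct_zero, add_zero]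

theorem sum_sum_sq_le_sum_sum_sq_sub [CommRing R] [LinearOrder R] [IsStrictOrderedRing R]
    (A D : Matrix m n R) (horth : ∑ i, ∑ j, A i j * D i j = 0) :
    ∑ i, ∑ j, A i j ^ 2 ≤ ∑ i, ∑ j, (A - D) i j ^ 2 := by
  have hexpand : ∑ i, ∑ j, (A - D) i j ^ 2
      = ∑ i, ∑ j, A i j ^ 2 - 2 * ∑ i, ∑ j, A i j * D i j + ∑ i, ∑ j, D i j ^ 2 := by
    simp only [Finset.mul_sum, ← Finset.sum_sub_distrib, ← Finset.sum_add_distrib]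
    exact Finset.sum_congr rfl fun i _ => Finset.sum_congr rfl fun j _ => by
      rw [Matrix.sub_apply]; ring
  have hD : 0 ≤ ∑ i, ∑ j, D i j ^ 2 := by positivity
  rw [hexpand, horth]
  linarith

end Frobenius

section ConstraintProj

variable {m n : Type*} [Fintype m] [Fintype n]

noncomputable def constraintProj (e : n → ℝ) (f : m → ℝ) (s : m → ℝ) (r : n → ℝ)
    (T : Matrix m n ℝ) : Matrix m n ℝ :=
  T - (e ⬝ᵥ e)⁻¹ • (vecMulVec (T.mulVec e - s) e
        - ((f ⬝ᵥ (T.mulVec e - s)) / (e ⬝ᵥ e + f ⬝ᵥ f)) • vecMulVec f e)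
    - (f ⬝ᵥ f)⁻¹ • (vecMulVec f (T.transpose.mulVec f - r)
        - ((e ⬝ᵥ (T.transpose.mulVec f - r)) / (e ⬝ᵥ e + f ⬝ᵥ f)) • vecMulVec f e)

variable {e : n → ℝ} {f : m → ℝ} {s : m → ℝ} {r : n → ℝ}

theorem dotProduct_transpose_mulVec_sub_eq (hconsist : f ⬝ᵥ s = e ⬝ᵥ r) (T : Matrix m n ℝ) :
    e ⬝ᵥ (Tᵀ *ᵥ f - r) = f ⬝ᵥ (T *ᵥ e - s) := by
  rw [dotProduct_sub, dotProduct_sub, dotProduct_transpose_mulVec, hconsist]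

theorem constraintProj_mulVec (he : e ≠ 0) (hf : f ≠ 0) (hconsist : f ⬝ᵥ s = e ⬝ᵥ r)
    (T : Matrix m n ℝ) : constraintProj e f s r T *ᵥ e = s := by
  have hee := dotProduct_self_pos he
  have hff := dotProduct_self_pos hf
  simp only [constraintProj, sub_mulVec, smul_mulVec, vecMulVec_mulVec, op_smul_eq_smul,
    dotProduct_transpose_mulVec_sub_eq hconsist, dotProduct_comm _ e]
  ext i
  simp only [Pi.sub_apply, Pi.smul_apply, smul_eq_mul]
  field_simp
  ring

theorem transpose_constraintProj_mulVec (he : e ≠ 0) (hf : f ≠ 0)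
    (hconsist : f ⬝ᵥ s = e ⬝ᵥ r) (T : Matrix m n ℝ) :
    (constraintProj e f s r T)ᵀ *ᵥ f = r := by
  have hee := dotProduct_self_pos he
  have hff := dotProduct_self_pos hf
  simp only [constraintProj, transpose_sub, transpose_smul, transpose_vecMulVec, sub_mulVec,
    smul_mulVec, vecMulVec_mulVec, op_smul_eq_smul, dotProduct_transpose_mulVec_sub_eq hconsist,
    dotProduct_comm _ f]
  ext i
  simp only [Pi.sub_apply, Pi.smul_apply, smul_eq_mul]
  field_simp
  ring

theorem exists_sub_constraintProj_eq (T : Matrix m n ℝ) :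
    ∃ u v, T - constraintProj e f s r T = vecMulVec u e + vecMulVec f v := by
  set σ := e ⬝ᵥ e + f ⬝ᵥ f
  refine ⟨(e ⬝ᵥ e)⁻¹ • (T *ᵥ e - s)
      - ((e ⬝ᵥ e)⁻¹ * ((f ⬝ᵥ (T *ᵥ e - s)) / σ) + (f ⬝ᵥ f)⁻¹ * ((e ⬝ᵥ (Tᵀ *ᵥ f - r)) / σ)) • f,
    (f ⬝ᵥ f)⁻¹ • (Tᵀ *ᵥ f - r), ?_⟩
  ext i j
  simp only [constraintProj, Matrix.sub_apply, Matrix.add_apply, Matrix.smul_apply,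
    vecMulVec_apply, Pi.sub_apply, Pi.smul_apply, smul_eq_mul]
  ring

theorem sum_sum_sq_sub_constraintProj_le (he : e ≠ 0) (hf : f ≠ 0)
    (hconsist : f ⬝ᵥ s = e ⬝ᵥ r) (T S : Matrix m n ℝ) (hSe : S *ᵥ e = s) (hSf : Sᵀ *ᵥ f = r) :
    ∑ i, ∑ j, (T - constraintProj e f s r T) i j ^ 2 ≤ ∑ i, ∑ j, (T - S) i j ^ 2 := by
  set P := constraintProj e f s r T
  have hDe : (S - P) *ᵥ e = 0 := by
    rw [sub_mulVec, hSe, constraintProj_mulVec he hf hconsist, sub_self]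
  have hDf : (S - P)ᵀ *ᵥ f = 0 := by
    rw [transpose_sub, sub_mulVec, hSf, transpose_constraintProj_mulVec he hf hconsist, sub_self]
  obtain ⟨u, v, huv⟩ := exists_sub_constraintProj_eq (e := e) (f := f) (s := s) (r := r) T
  have horth : ∑ i, ∑ j, (T - P) i j * (S - P) i j = 0 := by
    rw [huv]
    exact sum_sum_vecMulVec_add_vecMulVec_mul_eq_zero hDe hDf u v
  simpa only [sub_sub_sub_cancel_right] using sum_sum_sq_le_sum_sum_sq_sub _ _ horth

end ConstraintProj

/-- For nonzero `e ∈ ℝⁿ`, `f ∈ ℝᵐ` and `s ∈ ℝᵐ`, `r ∈ ℝⁿ` with `⟨f,s⟩ = ⟨e,r⟩`, the set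
`C = {T : Te = s, Tᵀf = r}` is nonempty and the Frobenius projection of any `T` onto `C`
is `T − (1/‖e‖²)((Te−s)eᵀ − (⟨f,Te−s⟩/(‖e‖²+‖f‖²)) f eᵀ)
     − (1/‖f‖²)(f(Tᵀf−r)ᵀ − (⟨e,Tᵀf−r⟩/(‖e‖²+‖f‖²)) f eᵀ)`. -/
theorem stmt_9 {m n : ℕ} (e : Fin n → ℝ) (f : Fin m → ℝ) (he : e ≠ 0) (hf : f ≠ 0)
    (s : Fin m → ℝ) (r : Fin n → ℝ) (hconsist : f ⬝ᵥ s = e ⬝ᵥ r)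
    (C : Set (Matrix (Fin m) (Fin n) ℝ))
    (hC : C = {T | T.mulVec e = s ∧ T.transpose.mulVec f = r}) :
    C.Nonempty ∧
    ∀ T : Matrix (Fin m) (Fin n) ℝ,
      (T - (e ⬝ᵥ e)⁻¹ • (vecMulVec (T.mulVec e - s) e
            - ((f ⬝ᵥ (T.mulVec e - s)) / (e ⬝ᵥ e + f ⬝ᵥ f)) • vecMulVec f e)
         - (f ⬝ᵥ f)⁻¹ • (vecMulVec f (T.transpose.mulVec f - r)
            - ((e ⬝ᵥ (T.transpose.mulVec f - r)) / (e ⬝ᵥ e + f ⬝ᵥ f)) • vecMulVec f e)) ∈ C ∧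
      ∀ S ∈ C,
        (∑ i, ∑ j, (T - (T - (e ⬝ᵥ e)⁻¹ • (vecMulVec (T.mulVec e - s) e
            - ((f ⬝ᵥ (T.mulVec e - s)) / (e ⬝ᵥ e + f ⬝ᵥ f)) • vecMulVec f e)
         - (f ⬝ᵥ f)⁻¹ • (vecMulVec f (T.transpose.mulVec f - r)
            - ((e ⬝ᵥ (T.transpose.mulVec f - r)) / (e ⬝ᵥ e + f ⬝ᵥ f)) • vecMulVec f e))) i j ^ 2)
          ≤ ∑ i, ∑ j, (T - S) i j ^ 2 := by
  subst hC
  have hmem : ∀ T, constraintProj e f s r T ∈ {T | T *ᵥ e = s ∧ Tᵀ *ᵥ f = r} := fun T =>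
    ⟨constraintProj_mulVec he hf hconsist T, transpose_constraintProj_mulVec he hf hconsist T⟩
  exact ⟨⟨_, hmem 0⟩, fun T => ⟨hmem T, fun S ⟨hSe, hSf⟩ =>
    sum_sum_sq_sub_constraintProj_le he hf hconsist T S hSe hSf⟩⟩
end

section
/- Let e = (1,…,1) ∈ ℝⁿ, f = (1,…,1) ∈ ℝᵐ, let s ∈ ℝᵐ and r ∈ ℝⁿ satisfy Σᵢ sᵢ = Σⱼ rⱼ, and let C = {T ∈ ℝ^{m×n} : every row sum of T equals the corresponding entry of s and every column sum equals the corresponding entry of r}. Then C is nonempty and, for every T ∈ ℝ^{m×n}, the (i,j)-entry of the Frobenius projection of T onto C is T_{ij} + (s_i − ρ_i(T))/n + (r_j − κ_j(T))/m + (Σᵢρ_i(T) − Σⱼrⱼ)/(mn), where ρ_i(T) is the i-th row sum and κ_j(T) the j-th column sum of T. -/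
open Matrix

/-
The constraint set is an affine subspace whose direction consists of the matrices with zero row
and column sums, and such a matrix is Frobenius-orthogonal to every matrix of the form
`a i + b j`. The matrix `P` given by Romero's formula satisfies the constraints and `T - P` has this form, so for
every feasible `S` Pythagoras gives `‖T - S‖² = ‖T - P‖² + ‖P - S‖²`.
-/

variable {ι κ K : Type*} [Fintype ι] [Fintype κ]

def transportPolytope [AddCommMonoid K] (s : ι → K) (r : κ → K) : Set (Matrix ι κ K) :=
  {T | (∀ i, ∑ j, T i j = s i) ∧ ∀ j, ∑ i, T i j = r j}

def romeroProj [Field K] (s : ι → K) (r : κ → K) (T : Matrix ι κ K) : Matrix ι κ K :=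
  of fun i j => T i j + (s i - ∑ j', T i j') / Fintype.card κ
    + (r j - ∑ i', T i' j) / Fintype.card ι
    + ((∑ i', ∑ j', T i' j') - ∑ j', r j') / (Fintype.card ι * Fintype.card κ)

theorem sum_sum_add_mul_eq_zero [NonUnitalNonAssocSemiring K] (a : ι → K) (b : κ → K)
    (D : Matrix ι κ K) (hrow : ∀ i, ∑ j, D i j = 0) (hcol : ∀ j, ∑ i, D i j = 0) :
    ∑ i, ∑ j, (a i + b j) * D i j = 0 := by
  simp only [add_mul, Finset.sum_add_distrib, ← Finset.mul_sum, hrow, mul_zero, zero_add]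
  rw [Finset.sum_comm]
  simp only [← Finset.mul_sum, hcol, mul_zero, Finset.sum_const_zero]

theorem sub_mem_transportPolytope_zero [AddCommGroup K] {s : ι → K} {r : κ → K}
    {P S : Matrix ι κ K} (hP : P ∈ transportPolytope s r) (hS : S ∈ transportPolytope s r) :
    P - S ∈ transportPolytope (0 : ι → K) (0 : κ → K) :=
  ⟨fun i => by simp [Finset.sum_sub_distrib, hP.1 i, hS.1 i],
    fun j => by simp [Finset.sum_sub_distrib, hP.2 j, hS.2 j]⟩

theorem sum_sum_sq_sub_eq_add [CommRing K] {s : ι → K} {r : κ → K}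
    {T P S : Matrix ι κ K} (a : ι → K) (b : κ → K) (hTP : ∀ i j, (T - P) i j = a i + b j)
    (hP : P ∈ transportPolytope s r) (hS : S ∈ transportPolytope s r) :
    ∑ i, ∑ j, (T - S) i j ^ 2 = ∑ i, ∑ j, (T - P) i j ^ 2 + ∑ i, ∑ j, (P - S) i j ^ 2 := by
  obtain ⟨hrow, hcol⟩ := sub_mem_transportPolytope_zero hP hS
  have hcross := sum_sum_add_mul_eq_zero a b (P - S) hrow hcol
  have hpoint : ∀ i j, (T - S) i j ^ 2
      = (T - P) i j ^ 2 + (P - S) i j ^ 2 + 2 * ((a i + b j) * (P - S) i j) := by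
    intro i j
    rw [← hTP]
    simp only [Matrix.sub_apply]
    ring
  simp only [hpoint, Finset.sum_add_distrib, ← Finset.mul_sum, hcross, mul_zero, add_zero]

theorem romeroProj_mem_transportPolytope [Field K] [CharZero K] [Nonempty ι] [Nonempty κ]
    {s : ι → K} {r : κ → K} (hconsist : ∑ i, s i = ∑ j, r j) (T : Matrix ι κ K) :
    romeroProj s r T ∈ transportPolytope s r := by
  have hι : (Fintype.card ι : K) ≠ 0 := Nat.cast_ne_zero.mpr Fintype.card_ne_zero
  have hκ : (Fintype.card κ : K) ≠ 0 := Nat.cast_ne_zero.mpr Fintype.card_ne_zero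
  constructor
  · intro i
    simp only [romeroProj, of_apply, Finset.sum_add_distrib, Finset.sum_const, Finset.card_univ,
      nsmul_eq_mul, ← Finset.sum_div, Finset.sum_sub_distrib]
    rw [Finset.sum_comm (f := fun j i' => T i' j)]
    field_simp
    ring
  · intro j
    simp only [romeroProj, of_apply, Finset.sum_add_distrib, Finset.sum_const, Finset.card_univ,
      nsmul_eq_mul, ← Finset.sum_div, Finset.sum_sub_distrib, hconsist]
    field_simp
    ring

theorem sum_sum_sq_sub_romeroProj_le [Field K] [LinearOrder K] [IsStrictOrderedRing K]
    [Nonempty ι] [Nonempty κ] {s : ι → K} {r : κ → K} (hconsist : ∑ i, s i = ∑ j, r j)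
    (T : Matrix ι κ K) {S : Matrix ι κ K} (hS : S ∈ transportPolytope s r) :
    ∑ i, ∑ j, (T - romeroProj s r T) i j ^ 2 ≤ ∑ i, ∑ j, (T - S) i j ^ 2 := by
  have hTP : ∀ i j, (T - romeroProj s r T) i j
      = -((s i - ∑ j', T i j') / Fintype.card κ
          + ((∑ i', ∑ j', T i' j') - ∑ j', r j') / (Fintype.card ι * Fintype.card κ))
        + -((r j - ∑ i', T i' j) / Fintype.card ι) := by
    intro i j
    simp only [romeroProj, Matrix.sub_apply, of_apply]
    ring
  rw [sum_sum_sq_sub_eq_add _ _ hTP (romeroProj_mem_transportPolytope hconsist T) hS]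
  exact le_add_of_nonneg_right (by positivity)

/-- Romero's formula: with all-ones vectors, `s ∈ ℝᵐ`, `r ∈ ℝⁿ` with `Σ s = Σ r`, the set
`C` of matrices with row sums `s` and column sums `r` is nonempty, and the Frobenius
projection of `T` onto `C` has `(i,j)` entry
`T i j + (s i − ρ i)/n + (r j − κ j)/m + (Σ ρ − Σ r)/(m n)`,
where `ρ`, `κ` are the row and column sums of `T`. -/
theorem stmt_10 {m n : ℕ} (hm : 0 < m) (hn : 0 < n)
    (s : Fin m → ℝ) (r : Fin n → ℝ) (hconsist : ∑ i, s i = ∑ j, r j)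
    (C : Set (Matrix (Fin m) (Fin n) ℝ))
    (hC : C = {T | (∀ i, ∑ j, T i j = s i) ∧ (∀ j, ∑ i, T i j = r j)}) :
    C.Nonempty ∧
    ∀ T : Matrix (Fin m) (Fin n) ℝ,
      (Matrix.of fun i j =>
          T i j + (s i - ∑ j', T i j') / n + (r j - ∑ i', T i' j) / m
            + ((∑ i', ∑ j', T i' j') - ∑ j', r j') / (m * n)) ∈ C ∧
      ∀ S ∈ C,
        (∑ i, ∑ j, (T - Matrix.of fun i j =>
            T i j + (s i - ∑ j', T i j') / n + (r j - ∑ i', T i' j) / m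
              + ((∑ i', ∑ j', T i' j') - ∑ j', r j') / (m * n)) i j ^ 2)
          ≤ ∑ i, ∑ j, (T - S) i j ^ 2 := by
  have := Fin.pos_iff_nonempty.mp hm
  have := Fin.pos_iff_nonempty.mp hn
  have hproj (T : Matrix (Fin m) (Fin n) ℝ) : romeroProj s r T = Matrix.of fun i j =>
      T i j + (s i - ∑ j', T i j') / n + (r j - ∑ i', T i' j) / m
        + ((∑ i', ∑ j', T i' j') - ∑ j', r j') / (m * n) := by
    simp only [romeroProj, Fintype.card_fin]
  change C = transportPolytope s r at hC
  subst hC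
  refine ⟨⟨_, romeroProj_mem_transportPolytope hconsist 0⟩, fun T => ?_⟩
  rw [← hproj]
  exact ⟨romeroProj_mem_transportPolytope hconsist T,
    fun S hS => sum_sum_sq_sub_romeroProj_le hconsist T hS⟩
end

section
/- Let e, f ∈ ℝⁿ be nonzero, set E = ee ᵀ/‖e‖², F = ffᵀ/‖f‖², and let γ ∈ ℝ. Let C = {T ∈ ℝ^{n×n} : Te = γe and Tᵀf = γf}. Then C is nonempty (γI ∈ C), and for every T ∈ ℝ^{n×n}, the Frobenius projection of T onto C equals γI + (I − F)(T − γI)(I − E). -/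
/-! The affine set `C` is `γI + K` with `K = {D : D e = 0, Dᵀ f = 0}`, and
`X ↦ (I - F) X (I - E)` is the Frobenius-orthogonal projection onto `K`: it maps into `K`,
and `X - (I - F) X (I - E)` is a sum of terms `F Y` and `Y E`, which are orthogonal to `K`
because `F D = 0 = D E` for `D ∈ K`. Pythagoras then shows that `γI + (I - F)(T - γI)(I - E)`
is a nearest point of `C`. -/

open Matrix

namespace Matrix

variable {R : Type*} {m n : Type*} [Fintype n]

theorem sum_sum_mul_eq_trace_transpose_mul [Fintype m] [AddCommMonoid R] [Mul R]
    (A B : Matrix m n R) :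
    ∑ i, ∑ j, A i j * B i j = trace (Aᵀ * B) := by
  simp only [trace, diag, mul_apply, transpose_apply]
  exact Finset.sum_comm

theorem sum_sum_sq_le_of_trace_transpose_mul_eq_zero [Fintype m] [CommRing R] [LinearOrder R]
    [IsStrictOrderedRing R] (A D : Matrix m n R) (h : trace (Aᵀ * D) = 0) :
    ∑ i, ∑ j, A i j ^ 2 ≤ ∑ i, ∑ j, (A + D) i j ^ 2 := by
  have hcross : ∑ i, ∑ j, A i j * D i j = 0 := by
    rw [sum_sum_mul_eq_trace_transpose_mul, h]
  have hexpand : ∑ i, ∑ j, (A + D) i j ^ 2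
      = ∑ i, ∑ j, A i j ^ 2 + ∑ i, ∑ j, D i j ^ 2 + 2 * ∑ i, ∑ j, A i j * D i j := by
    simp only [add_apply, add_sq, Finset.sum_add_distrib, Finset.mul_sum, mul_assoc]
    ring
  have hD : 0 ≤ ∑ i, ∑ j, D i j ^ 2 := by positivity
  linarith

section LineProjection

variable [Field R]

/-- `v vᵀ / ‖v‖²`; for `v = 0` the junk value `0⁻¹ = 0` makes it `0`, still the projection
onto `R v = 0`. -/
def lineProj (v : n → R) : Matrix n n R := (v ⬝ᵥ v)⁻¹ • vecMulVec v v

theorem transpose_lineProj (v : n → R) : (lineProj v)ᵀ = lineProj v := by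
  simp [lineProj]

theorem mul_lineProj_eq_zero {D : Matrix m n R} {v : n → R} (h : D *ᵥ v = 0) :
    D * lineProj v = 0 := by
  rw [lineProj, Matrix.mul_smul, mul_vecMulVec, h, zero_vecMulVec, smul_zero]

theorem lineProj_mul_eq_zero {D : Matrix n m R} {v : n → R} (h : Dᵀ *ᵥ v = 0) :
    lineProj v * D = 0 := by
  rw [← transpose_transpose (lineProj v * D), transpose_mul, transpose_lineProj,
    mul_lineProj_eq_zero h, transpose_zero]

theorem trace_transpose_sub_compress_mul_eq_zero [DecidableEq n] {e f : n → R} {D : Matrix n n R}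
    (he : D *ᵥ e = 0) (hf : Dᵀ *ᵥ f = 0) (X : Matrix n n R) :
    trace ((X - (1 - lineProj f) * X * (1 - lineProj e))ᵀ * D) = 0 := by
  have hsplit : X - (1 - lineProj f) * X * (1 - lineProj e)
      = lineProj f * X + ((1 - lineProj f) * X) * lineProj e := by
    simp only [Matrix.sub_mul, Matrix.mul_sub, Matrix.one_mul, Matrix.mul_one]
    abel
  have hF : trace ((lineProj f * X)ᵀ * D) = 0 := by
    rw [transpose_mul, transpose_lineProj, Matrix.mul_assoc, lineProj_mul_eq_zero hf,
      Matrix.mul_zero, trace_zero]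
  have hE : trace ((((1 - lineProj f) * X) * lineProj e)ᵀ * D) = 0 := by
    rw [transpose_mul, transpose_lineProj, Matrix.mul_assoc, trace_mul_comm,
      Matrix.mul_assoc, mul_lineProj_eq_zero he, Matrix.mul_zero, trace_zero]
  rw [hsplit, transpose_add, Matrix.add_mul, trace_add, hF, hE, add_zero]

theorem lineProj_mulVec_self [LinearOrder R] [IsStrictOrderedRing R] (v : n → R) :
    lineProj v *ᵥ v = v := by
  rcases eq_or_ne v 0 with rfl | hv
  · exact mulVec_zero _
  · rw [lineProj, smul_mulVec, vecMulVec_mulVec, op_smul_eq_smul, smul_smul,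
      inv_mul_cancel₀ (dotProduct_self_eq_zero.not.mpr hv), one_smul]

variable [LinearOrder R] [IsStrictOrderedRing R] [DecidableEq n]

theorem compress_mulVec_eq_zero (e f : n → R) (X : Matrix n n R) :
    ((1 - lineProj f) * X * (1 - lineProj e)) *ᵥ e = 0 := by
  rw [← mulVec_mulVec, sub_mulVec, one_mulVec, lineProj_mulVec_self, sub_self, mulVec_zero]

theorem transpose_compress_mulVec_eq_zero (e f : n → R) (X : Matrix n n R) :
    ((1 - lineProj f) * X * (1 - lineProj e))ᵀ *ᵥ f = 0 := by
  simp only [transpose_mul, transpose_sub, transpose_one, transpose_lineProj]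
  simpa only [Matrix.mul_assoc] using compress_mulVec_eq_zero f e Xᵀ

end LineProjection

end Matrix

theorem stmt_11_general {n : ℕ} (e f : Fin n → ℝ) (γ : ℝ)
    (E F : Matrix (Fin n) (Fin n) ℝ)
    (hE : E = (e ⬝ᵥ e)⁻¹ • vecMulVec e e) (hF : F = (f ⬝ᵥ f)⁻¹ • vecMulVec f f)
    (C : Set (Matrix (Fin n) (Fin n) ℝ))
    (hC : C = {T | T.mulVec e = γ • e ∧ T.transpose.mulVec f = γ • f}) :
    (γ • (1 : Matrix (Fin n) (Fin n) ℝ)) ∈ C ∧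
    ∀ T : Matrix (Fin n) (Fin n) ℝ,
      (γ • (1 : Matrix (Fin n) (Fin n) ℝ) + (1 - F) * (T - γ • 1) * (1 - E)) ∈ C ∧
      ∀ S ∈ C,
        (∑ i, ∑ j, (T - (γ • (1 : Matrix (Fin n) (Fin n) ℝ)
            + (1 - F) * (T - γ • 1) * (1 - E))) i j ^ 2)
          ≤ ∑ i, ∑ j, (T - S) i j ^ 2 := by
  obtain rfl : E = lineProj e := hE
  obtain rfl : F = lineProj f := hF
  subst hC
  have hγ (v : Fin n → ℝ) : (γ • (1 : Matrix (Fin n) (Fin n) ℝ)) *ᵥ v = γ • v := by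
    rw [smul_mulVec, one_mulVec]
  refine ⟨⟨hγ e, by rw [transpose_smul, transpose_one, hγ]⟩, fun T => ?_⟩
  set P := γ • 1 + (1 - lineProj f) * (T - γ • 1) * (1 - lineProj e)
  have hP : P *ᵥ e = γ • e ∧ Pᵀ *ᵥ f = γ • f :=
    ⟨by rw [add_mulVec, hγ, compress_mulVec_eq_zero, add_zero],
     by rw [transpose_add, add_mulVec, transpose_smul, transpose_one, hγ,
       transpose_compress_mulVec_eq_zero, add_zero]⟩
  refine ⟨hP, fun S hS => ?_⟩
  have hDe : (P - S) *ᵥ e = 0 := by rw [sub_mulVec, hP.1, hS.1, sub_self]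
  have hDf : (P - S)ᵀ *ᵥ f = 0 := by rw [transpose_sub, sub_mulVec, hP.2, hS.2, sub_self]
  have horth := trace_transpose_sub_compress_mul_eq_zero hDe hDf (T - γ • 1)
  rw [← sub_add_eq_sub_sub] at horth
  simpa only [sub_add_sub_cancel] using
    sum_sum_sq_le_of_trace_transpose_mul_eq_zero (T - P) (P - S) horth

/-- Glunt–Hayden–Reams: for nonzero `e, f ∈ ℝⁿ`, `E = eeᵀ/‖e‖²`, `F = ffᵀ/‖f‖²`,
`γ ∈ ℝ`, and `C = {T : Te = γe, Tᵀf = γf}`, we have `γI ∈ C` and the Frobenius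
projection of `T` onto `C` is `γI + (I − F)(T − γI)(I − E)`. -/
theorem stmt_11 {n : ℕ} (e f : Fin n → ℝ) (he : e ≠ 0) (hf : f ≠ 0) (γ : ℝ)
    (E F : Matrix (Fin n) (Fin n) ℝ)
    (hE : E = (e ⬝ᵥ e)⁻¹ • vecMulVec e e) (hF : F = (f ⬝ᵥ f)⁻¹ • vecMulVec f f)
    (C : Set (Matrix (Fin n) (Fin n) ℝ))
    (hC : C = {T | T.mulVec e = γ • e ∧ T.transpose.mulVec f = γ • f}) :
    (γ • (1 : Matrix (Fin n) (Fin n) ℝ)) ∈ C ∧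
    ∀ T : Matrix (Fin n) (Fin n) ℝ,
      (γ • (1 : Matrix (Fin n) (Fin n) ℝ) + (1 - F) * (T - γ • 1) * (1 - E)) ∈ C ∧
      ∀ S ∈ C,
        (∑ i, ∑ j, (T - (γ • (1 : Matrix (Fin n) (Fin n) ℝ)
            + (1 - F) * (T - γ • 1) * (1 - E))) i j ^ 2)
          ≤ ∑ i, ∑ j, (T - S) i j ^ 2 :=
  stmt_11_general e f γ E F hE hF C hC
end

section
/- Let u = (1,…,1) ∈ ℝⁿ, J = (1/n) uuᵀ, and let G = {T ∈ ℝ^{n×n} : Tu = u = Tᵀu} be the affine set of generalized bistochastic matrices (all row and column sums equal 1). Then for every T ∈ ℝ^{n×n}, the Frobenius projection of T onto G equals J + (I − J)T(I − J). -/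
/-!
For a symmetric idempotent `J`, write `T = JTJ + JT(1 - J) + (1 - J)TJ + (1 - J)T(1 - J)`.
The constraints `SJ = J = JS` fix the first three blocks of `S` (to `J`, `0`, `0`) and leave the
last one free, so `P = J + (1 - J)T(1 - J)` is admissible, and `T - P = J(T - TJ) + (T - J)J`
is Frobenius-orthogonal to every difference `P - S` of admissible matrices, since such a
difference is annihilated by `J` on both sides. Pythagoras then gives minimality. For
`J = uuᵀ/(uᵀu)` the constraints `SJ = J` and `JS = J` are exactly `Su = u` and `Sᵀu = u`.
-/

open Matrix

namespace IsIdempotentElem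

variable {A : Type*} [Ring A] {e : A}

theorem add_sandwich_mul_self (he : IsIdempotentElem e) (t : A) :
    (e + (1 - e) * t * (1 - e)) * e = e := by
  rw [add_mul, mul_assoc _ (1 - e), he.one_sub_mul_self, mul_zero, add_zero, he.eq]

theorem mul_add_sandwich (he : IsIdempotentElem e) (t : A) :
    e * (e + (1 - e) * t * (1 - e)) = e := by
  rw [mul_add, ← mul_assoc, ← mul_assoc, he.mul_one_sub_self, zero_mul, zero_mul, add_zero,
    he.eq]

theorem sub_add_sandwich (he : IsIdempotentElem e) (t : A) :
    t - (e + (1 - e) * t * (1 - e)) = e * (t - t * e) + (t - e) * e := by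
  have : (t - e) * e = t * e - e := by rw [sub_mul, he.eq]
  rw [this]
  noncomm_ring

end IsIdempotentElem

namespace Matrix

variable {ι R : Type*} [Fintype ι]

section CommRing

variable [CommRing R] {J D : Matrix ι ι R}

theorem trace_mul_transpose_eq_zero (hJ : Jᵀ = J) (hJD : J * D = 0) (hDJ : D * J = 0)
    (X Y : Matrix ι ι R) : trace ((J * X + Y * J) * Dᵀ) = 0 := by
  have hDtJ : Dᵀ * J = 0 := by rw [← hJ, ← transpose_mul, hJD, transpose_zero]
  have hJDt : J * Dᵀ = 0 := by rw [← hJ, ← transpose_mul, hDJ, transpose_zero]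
  rw [add_mul, trace_add, mul_assoc, trace_mul_comm, mul_assoc, mul_assoc, hDtJ, hJDt,
    mul_zero, mul_zero, trace_zero, add_zero]

end CommRing

section Field

variable [Field R]

def rankOneProj (u : ι → R) : Matrix ι ι R := (u ⬝ᵥ u)⁻¹ • vecMulVec u u

theorem transpose_rankOneProj (u : ι → R) : (rankOneProj u)ᵀ = rankOneProj u := by
  rw [rankOneProj, transpose_smul, transpose_vecMulVec]

end Field

variable [Field R] [LinearOrder R] [IsStrictOrderedRing R]

theorem sum_sum_sq_le_of_trace_mul_transpose_eq_zero {κ : Type*} [Fintype κ]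
    {A B : Matrix ι κ R} (h : trace (A * Bᵀ) = 0) :
    ∑ i, ∑ j, A i j ^ 2 ≤ ∑ i, ∑ j, (A + B) i j ^ 2 := by
  have hAB : ∑ i, ∑ j, A i j * B i j = 0 := h
  have hexp : ∑ i, ∑ j, (A + B) i j ^ 2 =
      ∑ i, ∑ j, A i j ^ 2 + 2 * ∑ i, ∑ j, A i j * B i j + ∑ i, ∑ j, B i j ^ 2 := by
    simp only [add_apply, add_sq, Finset.sum_add_distrib, Finset.mul_sum, mul_assoc]
  have : 0 ≤ ∑ i, ∑ j, B i j ^ 2 := by positivity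
  linarith

theorem sum_sum_sq_sub_sandwich_le [DecidableEq ι] {J : Matrix ι ι R} (hJ : Jᵀ = J)
    (hJJ : IsIdempotentElem J) (T : Matrix ι ι R) {S : Matrix ι ι R} (hSJ : S * J = J)
    (hJS : J * S = J) :
    ∑ i, ∑ j, (T - (J + (1 - J) * T * (1 - J))) i j ^ 2 ≤ ∑ i, ∑ j, (T - S) i j ^ 2 := by
  set P := J + (1 - J) * T * (1 - J)
  have hJD : J * (P - S) = 0 := by rw [mul_sub, hJJ.mul_add_sandwich, hJS, sub_self]
  have hDJ : (P - S) * J = 0 := by rw [sub_mul, hJJ.add_sandwich_mul_self, hSJ, sub_self]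
  rw [show T - S = (T - P) + (P - S) by abel]
  apply sum_sum_sq_le_of_trace_mul_transpose_eq_zero
  rw [hJJ.sub_add_sandwich]
  exact trace_mul_transpose_eq_zero hJ hJD hDJ _ _

variable (u : ι → R)

theorem rankOneProj_mulVec_self : rankOneProj u *ᵥ u = u := by
  rcases eq_or_ne u 0 with rfl | hu
  · simp
  have : u ⬝ᵥ u ≠ 0 := by rwa [Ne, dotProduct_self_eq_zero]
  rw [rankOneProj, smul_mulVec, vecMulVec_mulVec, op_smul_eq_smul, smul_smul,
    inv_mul_cancel₀ this, one_smul]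

theorem mul_rankOneProj_eq_self_iff (S : Matrix ι ι R) :
    S * rankOneProj u = rankOneProj u ↔ S *ᵥ u = u := by
  constructor
  · intro h
    rw [← rankOneProj_mulVec_self u, mulVec_mulVec, h]
  · intro h
    rw [rankOneProj, Matrix.mul_smul, mul_vecMulVec, h]

theorem rankOneProj_mul_eq_self_iff (S : Matrix ι ι R) :
    rankOneProj u * S = rankOneProj u ↔ Sᵀ *ᵥ u = u := by
  rw [← mul_rankOneProj_eq_self_iff, ← transpose_rankOneProj, ← transpose_mul,
    transpose_inj, transpose_rankOneProj]

theorem isIdempotentElem_rankOneProj : IsIdempotentElem (rankOneProj u) :=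
  (mul_rankOneProj_eq_self_iff u _).2 (rankOneProj_mulVec_self u)

end Matrix

theorem stmt_13_general {n : ℕ}
    (J : Matrix (Fin n) (Fin n) ℝ)
    (hJ : J = (n : ℝ)⁻¹ • vecMulVec (fun _ => (1 : ℝ)) (fun _ => (1 : ℝ)))
    (G : Set (Matrix (Fin n) (Fin n) ℝ))
    (hG : G = {T | T.mulVec (fun _ => (1 : ℝ)) = (fun _ => (1 : ℝ)) ∧
      T.transpose.mulVec (fun _ => (1 : ℝ)) = (fun _ => (1 : ℝ))}) :
    ∀ T : Matrix (Fin n) (Fin n) ℝ,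
      (J + (1 - J) * T * (1 - J)) ∈ G ∧
      ∀ S ∈ G,
        (∑ i, ∑ j, (T - (J + (1 - J) * T * (1 - J))) i j ^ 2)
          ≤ ∑ i, ∑ j, (T - S) i j ^ 2 := by
  have hJ₁ : J = rankOneProj 1 := by
    rw [hJ, rankOneProj, one_dotProduct_one, Fintype.card_fin]
    rfl
  subst hG hJ₁
  intro T
  have hJJ := isIdempotentElem_rankOneProj (1 : Fin n → ℝ)
  refine ⟨⟨?_, ?_⟩, fun S ⟨hrow, hcol⟩ => ?_⟩
  · exact (mul_rankOneProj_eq_self_iff _ _).1 (hJJ.add_sandwich_mul_self T)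
  · exact (rankOneProj_mul_eq_self_iff _ _).1 (hJJ.mul_add_sandwich T)
  · exact sum_sum_sq_sub_sandwich_le (transpose_rankOneProj _) hJJ T
      ((mul_rankOneProj_eq_self_iff _ _).2 hrow) ((rankOneProj_mul_eq_self_iff _ _).2 hcol)

/-- Khoury's formula: with `u = (1,…,1) ∈ ℝⁿ` (`n ≥ 1`), `J = (1/n) uuᵀ`, and
`G = {T : Tu = u = Tᵀu}` the generalized bistochastic matrices, the Frobenius projection
of any `T` onto `G` is `J + (I − J)T(I − J)`. -/
theorem stmt_13 {n : ℕ} (hn : 1 ≤ n)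
    (J : Matrix (Fin n) (Fin n) ℝ)
    (hJ : J = (n : ℝ)⁻¹ • vecMulVec (fun _ => (1 : ℝ)) (fun _ => (1 : ℝ)))
    (G : Set (Matrix (Fin n) (Fin n) ℝ))
    (hG : G = {T | T.mulVec (fun _ => (1 : ℝ)) = (fun _ => (1 : ℝ)) ∧
      T.transpose.mulVec (fun _ => (1 : ℝ)) = (fun _ => (1 : ℝ))}) :
    ∀ T : Matrix (Fin n) (Fin n) ℝ,
      (J + (1 - J) * T * (1 - J)) ∈ G ∧
      ∀ S ∈ G,
        (∑ i, ∑ j, (T - (J + (1 - J) * T * (1 - J))) i j ^ 2)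
          ≤ ∑ i, ∑ j, (T - S) i j ^ 2 :=
  stmt_13_general J hJ G hG
end

section
/- Let e ∈ ℝⁿ and f ∈ ℝᵐ be nonzero, and define 𝒜(T) = (Te, Tᵀf) on ℝ^{m×n} with Frobenius inner product. Then for all (y,x) ∈ ℝᵐ × ℝⁿ, 𝒜*𝒜𝒜*(v,u) = 𝒜*(y,x), where (v,u) = ((1/‖e‖²)(y − (⟨y,f⟩/(‖e‖²+‖f‖²)) f), (1/‖f‖²)(x − (⟨x,e⟩/(‖e‖²+‖f‖²)) e)). -/
open Matrix

/-!
Write `T = v eᵀ + f uᵀ`. Then `𝒜 T = (‖e‖² v + ⟨u,e⟩ f, ⟨v,f⟩ e + ‖f‖² u)`, so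
`𝒜*𝒜 T = ‖e‖² v eᵀ + ‖f‖² f uᵀ + (⟨u,e⟩ + ⟨v,f⟩) f eᵀ`. For the given `(v,u)` one has
`‖e‖² v = y - (⟨y,f⟩/s) f` and `⟨v,f⟩ = ⟨y,f⟩/s` with `s = ‖e‖² + ‖f‖²`, and symmetrically for `u`;
the correction terms along `f eᵀ` then cancel.
-/

section

variable {K m n : Type*}

lemma vecMulVec_add_vecMulVec_mulVec [Fintype n] [CommRing K] (v : m → K) (e : n → K)
    (f : m → K) (u : n → K) :
    (vecMulVec v e + vecMulVec f u) *ᵥ e = (e ⬝ᵥ e) • v + (u ⬝ᵥ e) • f := by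
  simp only [add_mulVec, vecMulVec_mulVec, op_smul_eq_smul]

lemma transpose_vecMulVec_add_vecMulVec_mulVec [Fintype m] [CommRing K] (v : m → K) (e : n → K)
    (f : m → K) (u : n → K) :
    (vecMulVec v e + vecMulVec f u)ᵀ *ᵥ f = (v ⬝ᵥ f) • e + (f ⬝ᵥ f) • u := by
  simp only [transpose_add, transpose_vecMulVec, add_mulVec, vecMulVec_mulVec, op_smul_eq_smul]

lemma vecMulVec_mulVec_add_vecMulVec_transpose_mulVec [Fintype m] [Fintype n] [CommRing K]
    (v : m → K) (e : n → K) (f : m → K) (u : n → K) :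
    vecMulVec ((vecMulVec v e + vecMulVec f u) *ᵥ e) e +
        vecMulVec f ((vecMulVec v e + vecMulVec f u)ᵀ *ᵥ f) =
      vecMulVec ((e ⬝ᵥ e) • v) e + vecMulVec f ((f ⬝ᵥ f) • u) +
        (u ⬝ᵥ e + v ⬝ᵥ f) • vecMulVec f e := by
  rw [vecMulVec_add_vecMulVec_mulVec, transpose_vecMulVec_add_vecMulVec_mulVec]
  simp only [add_vecMulVec, vecMulVec_add, smul_vecMulVec, vecMulVec_smul]
  module

lemma dotProduct_eq_div_of_smul_eq [Fintype m] [Field K] {a s : K} {v y f : m → K}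
    (ha : a ≠ 0) (hs : a + f ⬝ᵥ f = s) (hs0 : s ≠ 0) (hv : a • v = y - ((y ⬝ᵥ f) / s) • f) :
    v ⬝ᵥ f = (y ⬝ᵥ f) / s := by
  have h : a * (v ⬝ᵥ f) = (y ⬝ᵥ f) - (y ⬝ᵥ f) / s * (f ⬝ᵥ f) := by
    rw [← smul_eq_mul, ← smul_dotProduct, hv, sub_dotProduct, smul_dotProduct, smul_eq_mul]
  apply mul_left_cancel₀ ha
  rw [h, ← hs]
  field_simp [hs ▸ hs0]
  ring

end

/-- For nonzero `e ∈ ℝⁿ`, `f ∈ ℝᵐ`, with `𝒜(T) = (Te, Tᵀf)` and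
`𝒜*(y,x) = y eᵀ + f xᵀ`, and `(v,u)` as in the projection construction,
`𝒜*𝒜𝒜*(v,u) = 𝒜*(y,x)`. -/
theorem stmt_16 {m n : ℕ} (e : Fin n → ℝ) (f : Fin m → ℝ) (he : e ≠ 0) (hf : f ≠ 0)
    (A : Matrix (Fin m) (Fin n) ℝ → (Fin m → ℝ) × (Fin n → ℝ))
    (hA : ∀ T, A T = (T.mulVec e, T.transpose.mulVec f))
    (Astar : (Fin m → ℝ) × (Fin n → ℝ) → Matrix (Fin m) (Fin n) ℝ)
    (hAstar : ∀ p, Astar p = vecMulVec p.1 e + vecMulVec f p.2)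
    (y : Fin m → ℝ) (x : Fin n → ℝ) (v : Fin m → ℝ) (u : Fin n → ℝ)
    (hv : v = (e ⬝ᵥ e)⁻¹ • (y - ((y ⬝ᵥ f) / (e ⬝ᵥ e + f ⬝ᵥ f)) • f))
    (hu : u = (f ⬝ᵥ f)⁻¹ • (x - ((x ⬝ᵥ e) / (e ⬝ᵥ e + f ⬝ᵥ f)) • e)) :
    Astar (A (Astar (v, u))) = Astar (y, x) := by
  have hee : 0 < e ⬝ᵥ e := by simpa using dotProduct_self_star_pos_iff.mpr he
  have hff : 0 < f ⬝ᵥ f := by simpa using dotProduct_self_star_pos_iff.mpr hf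
  have hs : e ⬝ᵥ e + f ⬝ᵥ f ≠ 0 := (add_pos hee hff).ne'
  have hev : (e ⬝ᵥ e) • v = y - ((y ⬝ᵥ f) / (e ⬝ᵥ e + f ⬝ᵥ f)) • f := by
    rw [hv, smul_inv_smul₀ hee.ne']
  have hfu : (f ⬝ᵥ f) • u = x - ((x ⬝ᵥ e) / (e ⬝ᵥ e + f ⬝ᵥ f)) • e := by
    rw [hu, smul_inv_smul₀ hff.ne']
  have hvf := dotProduct_eq_div_of_smul_eq hee.ne' rfl hs hev
  have hue := dotProduct_eq_div_of_smul_eq hff.ne' (add_comm _ _) hs hfu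
  rw [hAstar, hA, hAstar, hAstar, vecMulVec_mulVec_add_vecMulVec_transpose_mulVec, hev, hfu,
    hvf, hue]
  simp only [sub_vecMulVec, vecMulVec_sub, smul_vecMulVec, vecMulVec_smul]
  module
end
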